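/- Let G be an invertible symmetric real n×n matrix, N a real n×q matrix with NᵀG⁻¹N negative definite, n⁺ ∈ ℝⁿ with N₊ := [N n⁺] satisfying N₊ᵀG⁻¹N₊ invertible, c ∈ ℝⁿ, g(w) = Gw + c, h ∈ ℝ^q, h_p ∈ ℝ. Write P* = (PᵀG⁻¹P)⁻¹PᵀG⁻¹, H = G⁻¹(I − N N*), H₊ = G⁻¹(I − N₊N₊*). Suppose z ∈ ℝⁿ satisfies: Nᵀz + h = 0, n⁺ᵀz + h_p > 0, H₊ g(z) = 0, and u := −N₊* g(z) ≤ 0 componentwise. Set d = H n⁺ and r = −N* n⁺, suppose dᵀn⁺ < 0, let t₂ = −(n⁺ᵀz + h_p)/(dᵀn⁺), and suppose t₂ ≤ u_j/r_j for every j with r_j < 0. Then z̄ = z + t₂ d satisfies: Nᵀz̄ + h = 0 and n⁺ᵀz̄ + h_p = 0; H₊ g(z̄) = 0; −N₊* g(z̄) ≤ 0 componentwise; and N₊ᵀG⁻¹N₊ is negative definite; i.e., (z̄, α ∪ {p}) has all the defining properties of an S-pair for the enlarged active set. -/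

import Mathlib

open Matrix

/-!
The old constraints stay active because `NᵀH = 0`, hence `Nᵀd = 0`, and `t₂` is exactly the step
that makes the new constraint active. The key identity is `G d = n⁺ + N r = N₊ (r, 1)`: on the range
of `N₊` the matrix `H₊` vanishes and `N₊*` is a left inverse, so along the step stationarity persists
and the multipliers move linearly, `u ↦ u − t₂ (r, 1)`, staying nonpositive by the ratio test
defining `t₂`. Finally `−N₊ᵀG⁻¹N₊` is positive definite by the Schur complement criterion: the
complement of `−NᵀG⁻¹N` in it is `−n⁺ᵀHn⁺ = −dᵀn⁺ > 0`.
-/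

namespace Matrix

section WeightedProjection

variable {R m k : Type*} [CommRing R] [Fintype m] [DecidableEq m] [Fintype k] [DecidableEq k]
  (G : Matrix m m R) (P : Matrix m k R)

/-- The paper's `P*`. -/
noncomputable def weightedPinv : Matrix k m R := (Pᵀ * G⁻¹ * P)⁻¹ * Pᵀ * G⁻¹

/-- The paper's `H_P`. -/
noncomputable def reducedInv : Matrix m m R := G⁻¹ * (1 - P * weightedPinv G P)

variable {G P}

theorem weightedPinv_mul_self (hP : IsUnit (Pᵀ * G⁻¹ * P).det) : weightedPinv G P * P = 1 := by
  rw [weightedPinv, Matrix.mul_assoc, Matrix.mul_assoc, ← Matrix.mul_assoc Pᵀ,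
    nonsing_inv_mul _ hP]

theorem reducedInv_mul_self (hP : IsUnit (Pᵀ * G⁻¹ * P).det) : reducedInv G P * P = 0 := by
  rw [reducedInv, Matrix.mul_assoc, Matrix.sub_mul, Matrix.mul_assoc, weightedPinv_mul_self hP,
    Matrix.one_mul, Matrix.mul_one, sub_self, Matrix.mul_zero]

theorem transpose_mul_reducedInv (hP : IsUnit (Pᵀ * G⁻¹ * P).det) : Pᵀ * reducedInv G P = 0 := by
  simp only [reducedInv, weightedPinv, Matrix.mul_sub, Matrix.mul_one, ← Matrix.mul_assoc,
    mul_nonsing_inv _ hP, Matrix.one_mul, sub_self]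

theorem weightedPinv_mulVec_add_mulVec (hP : IsUnit (Pᵀ * G⁻¹ * P).det) (w : m → R) (x : k → R) :
    weightedPinv G P *ᵥ (w + P *ᵥ x) = weightedPinv G P *ᵥ w + x := by
  rw [mulVec_add, mulVec_mulVec, weightedPinv_mul_self hP, one_mulVec]

theorem reducedInv_mulVec_add_mulVec (hP : IsUnit (Pᵀ * G⁻¹ * P).det) (w : m → R) (x : k → R) :
    reducedInv G P *ᵥ (w + P *ᵥ x) = reducedInv G P *ᵥ w := by
  rw [mulVec_add, mulVec_mulVec, reducedInv_mul_self hP, zero_mulVec, add_zero]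

theorem mul_reducedInv_mulVec (hG : IsUnit G.det) (v : m → R) :
    G *ᵥ (reducedInv G P *ᵥ v) =
      fromCols P (replicateCol Unit v) *ᵥ Sum.elim (-(weightedPinv G P *ᵥ v)) 1 := by
  have hcol : replicateCol Unit v *ᵥ 1 = v := by
    ext
    simp [mulVec, dotProduct]
  rw [mulVec_mulVec, reducedInv, ← Matrix.mul_assoc, mul_nonsing_inv _ hG, Matrix.one_mul,
    fromCols_mulVec_sumElim, hcol, sub_mulVec, one_mulVec, mulVec_neg, ← mulVec_mulVec,
    neg_add_eq_sub]

end WeightedProjection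

open scoped ComplexOrder in
theorem posDef_fromBlocks₁₁_of_posDef_schur {𝕜 m k : Type*} [RCLike 𝕜] [Fintype m] [DecidableEq m]
    [Fintype k] [DecidableEq k] {A : Matrix m m 𝕜} (B : Matrix m k 𝕜) (D : Matrix k k 𝕜)
    (hA : A.PosDef) [Invertible A] (hS : (D - Bᴴ * A⁻¹ * B).PosDef) :
    (fromBlocks A B Bᴴ D).PosDef := by
  refine ((PosDef.fromBlocks₁₁ B D hA).2 hS.posSemidef).posDef_iff_det_ne_zero.2 ?_
  rw [det_fromBlocks₁₁, invOf_eq_nonsing_inv]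
  exact mul_ne_zero hA.det_pos.ne' hS.det_pos.ne'

theorem posDef_neg_replicateCol_transpose_mul_mul_replicateCol {m : Type*} [Fintype m]
    {M : Matrix m m ℝ} {v : m → ℝ} (hv : v ⬝ᵥ M *ᵥ v < 0) :
    (-((replicateCol Unit v)ᵀ * M * replicateCol Unit v)).PosDef := by
  have hdiag : -((replicateCol Unit v)ᵀ * M * replicateCol Unit v) =
      diagonal fun _ => -(v ⬝ᵥ M *ᵥ v) := by
    rw [transpose_replicateCol, Matrix.mul_assoc, ← replicateCol_mulVec,
      replicateRow_mul_replicateCol]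
    ext ⟨⟩ ⟨⟩
    simp
  rw [hdiag, posDef_diagonal_iff]
  exact fun _ => neg_pos.2 hv

section NegDef

variable {m k l : Type*} [Fintype m] [DecidableEq m] [Fintype k] [DecidableEq k]
  [Fintype l] [DecidableEq l] {G : Matrix m m ℝ}

theorem isUnit_det_of_posDef_neg {X : Matrix k k ℝ} (hX : (-X).PosDef) : IsUnit X.det := by
  rw [← isUnit_iff_isUnit_det, ← neg_neg X]
  exact hX.isUnit.neg

theorem posDef_neg_fromCols_of_posDef_neg_reducedInv (hG : G.IsSymm) {N : Matrix m k ℝ}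
    {V : Matrix m l ℝ} (hN : (-(Nᵀ * G⁻¹ * N)).PosDef)
    (hV : (-(Vᵀ * reducedInv G N * V)).PosDef) :
    (-((fromCols N V)ᵀ * G⁻¹ * fromCols N V)).PosDef := by
  have hGinv : G⁻¹ᵀ = G⁻¹ := by rw [transpose_nonsing_inv, hG.eq]
  let _ : Invertible (-(Nᵀ * G⁻¹ * N)) := hN.isUnit.invertible
  have hinv : (-(Nᵀ * G⁻¹ * N))⁻¹ = -(Nᵀ * G⁻¹ * N)⁻¹ := by
    refine inv_eq_right_inv ?_
    rw [neg_mul_neg, mul_nonsing_inv _ (isUnit_det_of_posDef_neg hN)]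
  have hB : (-(Nᵀ * G⁻¹ * V))ᴴ = -(Vᵀ * G⁻¹ * N) := by
    rw [conjTranspose_eq_transpose_of_trivial, transpose_neg, transpose_mul, transpose_mul,
      hGinv, transpose_transpose, Matrix.mul_assoc]
  have hblock : -((fromCols N V)ᵀ * G⁻¹ * fromCols N V) =
      fromBlocks (-(Nᵀ * G⁻¹ * N)) (-(Nᵀ * G⁻¹ * V)) (-(Nᵀ * G⁻¹ * V))ᴴ (-(Vᵀ * G⁻¹ * V)) := by
    rw [hB, transpose_fromCols, fromRows_mul, fromRows_mul_fromCols, fromBlocks_neg]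
  have hschur : -(Vᵀ * G⁻¹ * V) - (-(Nᵀ * G⁻¹ * V))ᴴ * (-(Nᵀ * G⁻¹ * N))⁻¹ * (-(Nᵀ * G⁻¹ * V)) =
      -(Vᵀ * reducedInv G N * V) := by
    rw [hB, hinv]
    simp only [reducedInv, weightedPinv, Matrix.neg_mul, Matrix.mul_neg, neg_neg,
      Matrix.mul_sub, Matrix.sub_mul, Matrix.mul_one, Matrix.mul_assoc]
    abel
  rw [hblock]
  exact posDef_fromBlocks₁₁_of_posDef_schur _ _ hN (hschur ▸ hV)

end NegDef

end Matrix

theorem sub_mul_nonpos_of_le_div {K : Type*} [Field K] [LinearOrder K] [IsStrictOrderedRing K]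
    {u r t : K} (hu : u ≤ 0) (ht : 0 ≤ t) (h : r < 0 → t ≤ u / r) : u - t * r ≤ 0 := by
  rcases lt_or_ge r 0 with hr | hr
  · linarith [(le_div_iff_of_neg hr).1 (h hr)]
  · nlinarith

/-- Full step of the dual algorithm: taking the primal step of length
`t₂ = −(n⁺ᵀz + h_p)/(dᵀn⁺)` produces a point with all the defining properties of an
S-pair for the enlarged active set. -/
theorem stmt_14 {n q : ℕ} (G : Matrix (Fin n) (Fin n) ℝ)
    (hGsym : G.IsSymm) (hG : IsUnit G.det)
    (N : Matrix (Fin n) (Fin q) ℝ)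
    (hnd : (-(Nᵀ * G⁻¹ * N)).PosDef)
    (nplus : Fin n → ℝ)
    (Nplus : Matrix (Fin n) (Fin q ⊕ Unit) ℝ)
    (hNplus : Nplus = Matrix.fromCols N (Matrix.replicateCol Unit nplus))
    (hNp : IsUnit (Nplusᵀ * G⁻¹ * Nplus).det)
    (c : Fin n → ℝ) (g : (Fin n → ℝ) → Fin n → ℝ) (hg : ∀ w, g w = G *ᵥ w + c)
    (h : Fin q → ℝ) (hp : ℝ)
    (H Hplus : Matrix (Fin n) (Fin n) ℝ)
    (hH : H = G⁻¹ * (1 - N * ((Nᵀ * G⁻¹ * N)⁻¹ * Nᵀ * G⁻¹)))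
    (hHplus : Hplus = G⁻¹ * (1 - Nplus * ((Nplusᵀ * G⁻¹ * Nplus)⁻¹ * Nplusᵀ * G⁻¹)))
    -- the V-triple conditions at z
    (z : Fin n → ℝ)
    (hact : Nᵀ *ᵥ z + h = 0)
    (hviol : nplus ⬝ᵥ z + hp > 0)
    (hstat : Hplus *ᵥ g z = 0)
    (u : Fin q ⊕ Unit → ℝ)
    (hu : u = -(((Nplusᵀ * G⁻¹ * Nplus)⁻¹ * Nplusᵀ * G⁻¹) *ᵥ g z))
    (hu0 : ∀ j, u j ≤ 0)
    -- step direction, dual direction and the primal step length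
    (d : Fin n → ℝ) (hd : d = H *ᵥ nplus)
    (r : Fin q → ℝ) (hr : r = -(((Nᵀ * G⁻¹ * N)⁻¹ * Nᵀ * G⁻¹) *ᵥ nplus))
    (hdn : d ⬝ᵥ nplus < 0)
    (t₂ : ℝ) (ht₂ : t₂ = -(nplus ⬝ᵥ z + hp) / (d ⬝ᵥ nplus))
    (hmin : ∀ j : Fin q, r j < 0 → t₂ ≤ u (Sum.inl j) / r j)
    (zbar : Fin n → ℝ) (hzbar : zbar = z + t₂ • d) :
    Nᵀ *ᵥ zbar + h = 0 ∧
    nplus ⬝ᵥ zbar + hp = 0 ∧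
    Hplus *ᵥ g zbar = 0 ∧
    (∀ j, (-(((Nplusᵀ * G⁻¹ * Nplus)⁻¹ * Nplusᵀ * G⁻¹) *ᵥ g zbar)) j ≤ 0) ∧
    (-(Nplusᵀ * G⁻¹ * Nplus)).PosDef := by
  have hNunit : IsUnit (Nᵀ * G⁻¹ * N).det := isUnit_det_of_posDef_neg hnd
  have hH' : H = reducedInv G N := hH
  have hHplus' : Hplus = reducedInv G Nplus := hHplus
  change r = -(weightedPinv G N *ᵥ nplus) at hr
  change u = -(weightedPinv G Nplus *ᵥ g z) at hu
  change _ ∧ _ ∧ _ ∧ (∀ j, (-(weightedPinv G Nplus *ᵥ g zbar)) j ≤ 0) ∧ _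
  have ht₂pos : 0 < t₂ := ht₂ ▸ div_pos_of_neg_of_neg (by linarith) hdn
  have hgzbar : g zbar = g z + Nplus *ᵥ (t₂ • Sum.elim r 1) := by
    rw [hg, hg, hzbar, mulVec_add, mulVec_smul, hd, hH', mul_reducedInv_mulVec hG, ← hr, ← hNplus,
      ← mulVec_smul, add_right_comm]
  refine ⟨?_, ?_, ?_, ?_, ?_⟩
  · rw [hzbar, mulVec_add, mulVec_smul, hd, mulVec_mulVec, hH', transpose_mul_reducedInv hNunit,
      zero_mulVec, smul_zero, add_zero, hact]
  · rw [hzbar, dotProduct_add, dotProduct_smul, smul_eq_mul, dotProduct_comm nplus d, ht₂,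
      div_mul_cancel₀ _ hdn.ne]
    ring
  · rwa [hgzbar, hHplus', reducedInv_mulVec_add_mulVec hNp, ← hHplus']
  · rw [hgzbar, weightedPinv_mulVec_add_mulVec hNp, ← neg_neg (weightedPinv G Nplus *ᵥ g z), ← hu]
    rintro (j | ⟨⟩) <;>
      simp only [neg_add, neg_neg, Pi.add_apply, Pi.neg_apply, Pi.smul_apply, Sum.elim_inl,
        Sum.elim_inr, Pi.one_apply, smul_eq_mul, mul_one, ← sub_eq_add_neg]
    · exact sub_mul_nonpos_of_le_div (hu0 _) ht₂pos.le (hmin j)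
    · linarith [hu0 (Sum.inr ())]
  · rw [hNplus]
    refine posDef_neg_fromCols_of_posDef_neg_reducedInv hGsym hnd
      (posDef_neg_replicateCol_transpose_mul_mul_replicateCol ?_)
    rwa [dotProduct_comm, ← hH', ← hd]
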